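/- arXiv:1009.5695 — 3 statements merged into one kernel-verified Lean document; each statement's English description precedes it below -/
import Mathlib

section
/- Let $X$ be a Banach space with modulus of uniform smoothness $\rho_X(\tau) = \sup\{\frac{\|x+\tau y\|+\|x-\tau y\|}{2} - 1 : \|x\|=\|y\|=1\}$, and suppose $\rho_X(\tau) \le s\tau^2$ for all $\tau > 0$, where $s > 0$. Then for every $x, y \in X$ and every $q \ge 2$, $\frac{\|x+y\|^q + \|x-y\|^q}{2} \le \left(\|x\|^2 + 5(s+q)\|y\|^2\right)^{q/2}$. -/
/-!
Put `a = ‖x + y‖`, `b = ‖x - y‖`, `c = (a + b) / 2`, `d = (a - b) / 2`. Comparing `1 ± t` with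
`exp (± t)` and `cosh u ≤ exp (u² / 2)` gives `((c + d)^q + (c - d)^q) / 2 ≤ (c² + 5 q d²)^(q/2)`
whenever `|d| ≤ c`, and always `|d| ≤ ‖y‖`. Applying the smoothness bound to `x / ‖x‖`, `y / ‖y‖`
with `τ = ‖y‖ / ‖x‖` gives `c ≤ ‖x‖ + s ‖y‖² / ‖x‖`, hence `c² ≤ ‖x‖² + 3 s ‖y‖²` as long as
`s ‖y‖² ≤ ‖x‖²`. When `‖x‖² ≤ s ‖y‖²` the triangle inequality `a, b ≤ ‖x‖ + ‖y‖` already suffices.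
-/

open Real

lemma rpow_eq_sq_rpow_half {x : ℝ} (hx : 0 ≤ x) (q : ℝ) : x ^ q = (x ^ 2) ^ (q / 2) := by
  rw [← rpow_natCast_mul hx]
  congr 1; push_cast; ring

lemma exp_le_one_add_five_mul {u : ℝ} (hu₀ : 0 ≤ u) (hu₂ : u ≤ 2) : exp u ≤ 1 + 5 * u := by
  have hconv := convexOn_exp.2 (Set.mem_univ 0) (Set.mem_univ 2) (by linarith : 0 ≤ 1 - u / 2)
    (by linarith : 0 ≤ u / 2) (by ring)
  have he2 : exp 2 < 9 := by
    rw [show (2 : ℝ) = 1 + 1 by norm_num, exp_add]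
    nlinarith [exp_one_lt_three, exp_pos 1]
  simp only [smul_eq_mul, mul_zero, zero_add, exp_zero, div_mul_cancel₀ u two_ne_zero] at hconv
  nlinarith

/-- For `q t² ≤ 2` the left side is at most `cosh (q t) ≤ exp (q² t² / 2)`; otherwise `|t|` is
small compared to `q t²` and the crude bound `1 ± t ≤ 1 + |t|` suffices. -/
lemma one_add_rpow_add_one_sub_rpow_le {q t : ℝ} (hq : 0 ≤ q) (ht : |t| ≤ 1) :
    ((1 + t) ^ q + (1 - t) ^ q) / 2 ≤ (1 + 5 * q * t ^ 2) ^ (q / 2) := by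
  obtain ⟨ht₁, ht₂⟩ := abs_le.1 ht
  have hbase : 0 ≤ 1 + 5 * q * t ^ 2 := by positivity
  rcases le_or_gt (q * t ^ 2) 2 with hsmall | hlarge
  · have hplus : (1 + t) ^ q ≤ exp (t * q) := by
      rw [exp_mul]
      exact rpow_le_rpow (by linarith) (by linarith [add_one_le_exp t]) hq
    have hminus : (1 - t) ^ q ≤ exp (-(t * q)) := by
      rw [← neg_mul, exp_mul]
      exact rpow_le_rpow (by linarith) (by linarith [add_one_le_exp (-t)]) hq
    calc ((1 + t) ^ q + (1 - t) ^ q) / 2 ≤ cosh (t * q) := by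
          rw [cosh_eq]; linarith
      _ ≤ exp ((t * q) ^ 2 / 2) := cosh_le_exp_half_sq _
      _ = exp (q * t ^ 2) ^ (q / 2) := by rw [← exp_mul]; ring_nf
      _ ≤ (1 + 5 * q * t ^ 2) ^ (q / 2) := by
          gcongr
          linarith [exp_le_one_add_five_mul (by positivity) hsmall]
  · have hplus : (1 + t) ^ q ≤ (1 + |t|) ^ q :=
      rpow_le_rpow (by linarith) (by linarith [le_abs_self t]) hq
    have hminus : (1 - t) ^ q ≤ (1 + |t|) ^ q :=
      rpow_le_rpow (by linarith) (by linarith [neg_abs_le t]) hq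
    have hsq : (1 + |t|) ^ 2 ≤ 1 + 5 * q * t ^ 2 := by
      nlinarith [sq_abs t, abs_nonneg t]
    calc ((1 + t) ^ q + (1 - t) ^ q) / 2 ≤ (1 + |t|) ^ q := by linarith
      _ = ((1 + |t|) ^ 2) ^ (q / 2) := rpow_eq_sq_rpow_half (by positivity) q
      _ ≤ (1 + 5 * q * t ^ 2) ^ (q / 2) := by gcongr

lemma add_rpow_add_sub_rpow_le {q c d : ℝ} (hq : 0 ≤ q) (hd : |d| ≤ c) :
    ((c + d) ^ q + (c - d) ^ q) / 2 ≤ (c ^ 2 + 5 * q * d ^ 2) ^ (q / 2) := by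
  rcases (abs_nonneg d).trans hd |>.eq_or_lt with rfl | hc
  · obtain rfl : d = 0 := abs_nonpos_iff.1 hd
    simp only [add_zero, sub_zero, rpow_eq_sq_rpow_half le_rfl q]
    norm_num
  · have ht : |d / c| ≤ 1 := by rwa [abs_div, abs_of_pos hc, div_le_one hc]
    have hplus : c + d = c * (1 + d / c) := by field_simp
    have hminus : c - d = c * (1 - d / c) := by field_simp
    calc ((c + d) ^ q + (c - d) ^ q) / 2
        = c ^ q * (((1 + d / c) ^ q + (1 - d / c) ^ q) / 2) := by
          rw [hplus, hminus, mul_rpow hc.le (by linarith [neg_abs_le (d / c)]),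
            mul_rpow hc.le (by linarith [le_abs_self (d / c)])]
          ring
      _ ≤ (c ^ 2) ^ (q / 2) * (1 + 5 * q * (d / c) ^ 2) ^ (q / 2) := by
          rw [← rpow_eq_sq_rpow_half hc.le]
          gcongr
          exact one_add_rpow_add_one_sub_rpow_le hq ht
      _ = (c ^ 2 + 5 * q * d ^ 2) ^ (q / 2) := by
          rw [← mul_rpow (by positivity) (by positivity)]
          field_simp

lemma sq_le_sq_add_three_mul_of_le_add_div {c u v : ℝ} (hu : 0 < u) (hv₀ : 0 ≤ v)
    (hv : v ≤ u ^ 2) (hc₀ : 0 ≤ c) (hc : c ≤ u + v / u) : c ^ 2 ≤ u ^ 2 + 3 * v := by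
  have hvu : (v / u) ^ 2 ≤ v := by
    rw [div_pow, div_le_iff₀ (by positivity)]
    nlinarith
  calc c ^ 2 ≤ (u + v / u) ^ 2 := by gcongr
    _ = u ^ 2 + 2 * v + (v / u) ^ 2 := by field_simp; ring
    _ ≤ u ^ 2 + 3 * v := by linarith

lemma norm_add_add_norm_sub_le_of_smoothness {X : Type*} [NormedAddCommGroup X] [NormedSpace ℝ X]
    {s : ℝ}
    (hρ : ∀ τ : ℝ, 0 < τ → ∀ x y : X, ‖x‖ = 1 → ‖y‖ = 1 →
      (‖x + τ • y‖ + ‖x - τ • y‖) / 2 - 1 ≤ s * τ ^ 2)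
    {x : X} (hx : x ≠ 0) (y : X) :
    ‖x + y‖ + ‖x - y‖ ≤ 2 * (‖x‖ + s * ‖y‖ ^ 2 / ‖x‖) := by
  rcases eq_or_ne y 0 with rfl | hy
  · simp [two_mul]
  have hx₀ : 0 < ‖x‖ := norm_pos_iff.2 hx
  have hscale : (‖y‖ / ‖x‖) • ‖y‖⁻¹ • y = ‖x‖⁻¹ • y := by
    rw [smul_smul]
    congr 1
    field_simp
  have H := hρ (‖y‖ / ‖x‖) (by positivity) (‖x‖⁻¹ • x) (‖y‖⁻¹ • y)
    (norm_smul_inv_norm hx) (norm_smul_inv_norm hy)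
  rw [hscale, ← smul_add, ← smul_sub, norm_smul, norm_smul, norm_inv, norm_norm] at H
  field_simp at H
  rw [mul_add, mul_div_assoc', ← sub_le_iff_le_add', le_div_iff₀ hx₀]
  linarith

lemma norm_add_rpow_add_norm_sub_rpow_le {E : Type*} [SeminormedAddCommGroup E] {q : ℝ}
    (hq : 0 ≤ q) (x y : E) :
    (‖x + y‖ ^ q + ‖x - y‖ ^ q) / 2 ≤
      (((‖x + y‖ + ‖x - y‖) / 2) ^ 2 + 5 * q * ‖y‖ ^ 2) ^ (q / 2) := by
  set a := ‖x + y‖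
  set b := ‖x - y‖
  have hdiff : |a - b| ≤ 2 * ‖y‖ := by
    refine (abs_norm_sub_norm_le _ _).trans ?_
    rw [add_sub_sub_cancel, two_mul]
    exact norm_add_le y y
  have hdiff_sq : ((a - b) / 2) ^ 2 ≤ ‖y‖ ^ 2 := by
    rw [← sq_abs, abs_div, abs_two]
    gcongr
    linarith
  calc (a ^ q + b ^ q) / 2
      = (((a + b) / 2 + (a - b) / 2) ^ q + ((a + b) / 2 - (a - b) / 2) ^ q) / 2 := by ring_nf
    _ ≤ (((a + b) / 2) ^ 2 + 5 * q * ((a - b) / 2) ^ 2) ^ (q / 2) :=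
        add_rpow_add_sub_rpow_le hq <| abs_le.2
          ⟨by linarith [norm_nonneg (x + y)], by linarith [norm_nonneg (x - y)]⟩
    _ ≤ (((a + b) / 2) ^ 2 + 5 * q * ‖y‖ ^ 2) ^ (q / 2) := by
        refine rpow_le_rpow (by positivity) ?_ (by positivity)
        nlinarith

theorem stmt3 {X : Type*} [NormedAddCommGroup X] [NormedSpace ℝ X]
    (s : ℝ) (hs : 0 < s)
    (hρ : ∀ τ : ℝ, 0 < τ → ∀ x y : X, ‖x‖ = 1 → ‖y‖ = 1 →
      (‖x + τ • y‖ + ‖x - τ • y‖) / 2 - 1 ≤ s * τ ^ 2)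
    (q : ℝ) (hq : 2 ≤ q) (x y : X) :
    (‖x + y‖ ^ q + ‖x - y‖ ^ q) / 2 ≤ (‖x‖ ^ 2 + 5 * (s + q) * ‖y‖ ^ 2) ^ (q / 2) := by
  have hq₀ : 0 ≤ q := by linarith
  have hsy : 0 ≤ s * ‖y‖ ^ 2 := by positivity
  rcases lt_or_ge (s * ‖y‖ ^ 2) (‖x‖ ^ 2) with hxy | hxy
  · have hx : 0 < ‖x‖ := by
      by_contra! hx
      simp only [norm_le_zero_iff.1 hx, norm_zero] at hxy
      linarith
    have hmean : ((‖x + y‖ + ‖x - y‖) / 2) ^ 2 ≤ ‖x‖ ^ 2 + 3 * (s * ‖y‖ ^ 2) :=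
      sq_le_sq_add_three_mul_of_le_add_div hx hsy hxy.le (by positivity) <| by
        linarith [norm_add_add_norm_sub_le_of_smoothness hρ (norm_pos_iff.1 hx) y]
    refine (norm_add_rpow_add_norm_sub_rpow_le hq₀ x y).trans ?_
    exact rpow_le_rpow (by positivity) (by linarith) (by positivity)
  · have hnorm : ∀ z : X, ‖z‖ ≤ ‖x‖ + ‖y‖ → ‖z‖ ^ q ≤ (‖x‖ + ‖y‖) ^ q := fun z hz =>
      rpow_le_rpow (norm_nonneg z) hz hq₀
    calc (‖x + y‖ ^ q + ‖x - y‖ ^ q) / 2 ≤ (‖x‖ + ‖y‖) ^ q := by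
          linarith [hnorm _ (norm_add_le x y), hnorm _ (norm_sub_le x y)]
      _ = ((‖x‖ + ‖y‖) ^ 2) ^ (q / 2) := rpow_eq_sq_rpow_half (by positivity) q
      _ ≤ (‖x‖ ^ 2 + 5 * (s + q) * ‖y‖ ^ 2) ^ (q / 2) := by
          gcongr
          nlinarith [sq_nonneg (‖x‖ - ‖y‖), sq_nonneg ‖y‖]
end

section
/- Let $X$ be a Banach space with $\rho_X(\tau) \le s\tau^2$ for all $\tau > 0$. Let $x_1, x_2, \ldots \in X$ and set $S_n = x_1 + \cdots + x_n$. Assume that $\|S_n - x_{n+1}\| \ge \|S_n\|$ for all $n \in \mathbb{N}$. Then for every $n$, $\|S_n\|^2 \le 10(s+2)(\|x_1\|^2 + \cdots + \|x_n\|^2)$. -/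
/-!
Let `Sₙ = x₁ + ⋯ + xₙ`. Applying the smoothness bound at `Sₙ / ‖Sₙ‖` in the direction of
`xₙ₊₁` with `τ = ‖xₙ₊₁‖ / ‖Sₙ‖`, and using `‖Sₙ‖ ≤ ‖Sₙ - xₙ₊₁‖` to discard the minus term, gives
`‖Sₙ₊₁‖ ≤ ‖Sₙ‖ + 2s‖xₙ₊₁‖² / ‖Sₙ‖`. When `‖Sₙ‖ > 2s‖xₙ₊₁‖` squaring yields
`‖Sₙ₊₁‖² ≤ ‖Sₙ‖² + (4s + 1)‖xₙ₊₁‖²`, and otherwise the triangle inequality does. Summing these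
increments bounds `‖Sₙ‖²` by `(4s + 1) ∑ ‖xᵢ‖²`.
-/

open Finset

section Smoothness

variable {X : Type*} [NormedAddCommGroup X] [NormedSpace ℝ X] {s : ℝ}
  (hρ : ∀ τ : ℝ, 0 < τ → ∀ x y : X, ‖x‖ = 1 → ‖y‖ = 1 →
    (‖x + τ • y‖ + ‖x - τ • y‖) / 2 - 1 ≤ s * τ ^ 2)
include hρ

theorem norm_add_add_norm_sub_le {a : X} (ha : a ≠ 0) (b : X) :
    ‖a‖ * (‖a + b‖ + ‖a - b‖) ≤ 2 * ‖a‖ ^ 2 + 2 * s * ‖b‖ ^ 2 := by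
  rcases eq_or_ne b 0 with rfl | hb
  · simp only [add_zero, sub_zero, norm_zero]
    nlinarith
  have hA : 0 < ‖a‖ := norm_pos_iff.mpr ha
  have hB : 0 < ‖b‖ := norm_pos_iff.mpr hb
  have hunit : ∀ {v : X}, 0 < ‖v‖ → ‖‖v‖⁻¹ • v‖ = 1 := fun hv => by
    rw [norm_smul, norm_inv, norm_norm, inv_mul_cancel₀ hv.ne']
  have hscale : (‖b‖ / ‖a‖) • ‖b‖⁻¹ • b = ‖a‖⁻¹ • b := by
    rw [smul_smul]
    congr 1
    field_simp
  have key := hρ (‖b‖ / ‖a‖) (div_pos hB hA) _ _ (hunit hA) (hunit hB)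
  rw [hscale, ← smul_add, ← smul_sub, norm_smul, norm_smul, norm_inv, norm_norm,
    div_pow] at key
  field_simp at key
  nlinarith [key]

theorem norm_add_sq_le_of_norm_le_norm_sub (hs : 0 ≤ s) {a b : X} (hab : ‖a‖ ≤ ‖a - b‖) :
    ‖a + b‖ ^ 2 ≤ ‖a‖ ^ 2 + (4 * s + 1) * ‖b‖ ^ 2 := by
  rcases le_or_gt ‖a‖ (2 * s * ‖b‖) with hsmall | hlarge
  · nlinarith [norm_add_le a b, norm_nonneg (a + b), norm_nonneg b]
  have hA : 0 < ‖a‖ := lt_of_le_of_lt (by positivity) hlarge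
  have hone_sided : ‖a‖ * ‖a + b‖ ≤ ‖a‖ ^ 2 + 2 * s * ‖b‖ ^ 2 := by
    nlinarith [norm_add_add_norm_sub_le hρ (norm_pos_iff.mp hA) b,
      mul_le_mul_of_nonneg_left hab hA.le]
  have hsq : (‖a‖ * ‖a + b‖) ^ 2 ≤ (‖a‖ ^ 2 + 2 * s * ‖b‖ ^ 2) ^ 2 :=
    pow_le_pow_left₀ (by positivity) hone_sided 2
  have hlarge_sq : (2 * s * ‖b‖) ^ 2 ≤ ‖a‖ ^ 2 := pow_le_pow_left₀ (by positivity) hlarge.le 2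
  have : ‖a‖ ^ 2 * ‖a + b‖ ^ 2 ≤ ‖a‖ ^ 2 * (‖a‖ ^ 2 + (4 * s + 1) * ‖b‖ ^ 2) := by
    nlinarith [mul_le_mul_of_nonneg_right hlarge_sq (sq_nonneg ‖b‖)]
  exact le_of_mul_le_mul_left this (by positivity)

theorem norm_sum_Icc_sq_le (hs : 0 ≤ s) (x : ℕ → X)
    (h : ∀ n, 1 ≤ n → ‖∑ i ∈ Icc 1 n, x i‖ ≤ ‖(∑ i ∈ Icc 1 n, x i) - x (n + 1)‖) :
    ∀ n, 1 ≤ n → ‖∑ i ∈ Icc 1 n, x i‖ ^ 2 ≤ (4 * s + 1) * ∑ i ∈ Icc 1 n, ‖x i‖ ^ 2 := by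
  intro n hn
  induction n, hn using Nat.le_induction with
  | base => simp only [Icc_self, sum_singleton]; nlinarith [sq_nonneg ‖x 1‖]
  | succ n hn ih =>
    rw [sum_Icc_succ_top (by omega) x, sum_Icc_succ_top (by omega) (fun i => ‖x i‖ ^ 2)]
    linarith [norm_add_sq_le_of_norm_le_norm_sub hρ hs (h n hn)]

end Smoothness

theorem stmt5 {X : Type*} [NormedAddCommGroup X] [NormedSpace ℝ X]
    (s : ℝ) (hs : 0 < s)
    (hρ : ∀ τ : ℝ, 0 < τ → ∀ x y : X, ‖x‖ = 1 → ‖y‖ = 1 →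
      (‖x + τ • y‖ + ‖x - τ • y‖) / 2 - 1 ≤ s * τ ^ 2)
    (x : ℕ → X)
    (h : ∀ n : ℕ, 1 ≤ n →
      ‖∑ i ∈ Finset.Icc 1 n, x i‖ ≤ ‖(∑ i ∈ Finset.Icc 1 n, x i) - x (n + 1)‖) :
    ∀ n : ℕ, 1 ≤ n →
      ‖∑ i ∈ Finset.Icc 1 n, x i‖ ^ 2 ≤ 10 * (s + 2) * ∑ i ∈ Finset.Icc 1 n, ‖x i‖ ^ 2 := by
  intro n hn
  calc ‖∑ i ∈ Icc 1 n, x i‖ ^ 2 ≤ (4 * s + 1) * ∑ i ∈ Icc 1 n, ‖x i‖ ^ 2 :=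
        norm_sum_Icc_sq_le hρ hs.le x h n hn
    _ ≤ 10 * (s + 2) * ∑ i ∈ Icc 1 n, ‖x i‖ ^ 2 := by
        gcongr ?_ * _
        linarith
end

section
/- Let $G=(V,E)$ be an $n$-vertex $d$-regular graph whose normalized adjacency matrix $A(G)$ has eigenvalues $1 = \lambda_1 \ge \lambda_2 \ge \cdots \ge \lambda_n$. Fix $p \in [1, \infty]$, and assume that $L_2(V)$ has an orthonormal eigenbasis of $A(G)$ consisting of vectors whose entries are all bounded by 1 in absolute value. Then for every nonempty proper subset $S \subsetneq V$, $\left|\frac{E_G(S, V\setminus S)}{\frac{d}{n}|S|(n-|S|)} - 1\right| \le \left(\sum_{i=2}^n |\lambda_i|^p\right)^{1/p} \left(\frac{|S|^{\frac{1}{p+1}}(n-|S|)^{\frac{p}{p+1}} + |S|^{\frac{p}{p+1}}(n-|S|)^{\frac{1}{p+1}}}{n}\right)^{\frac{p+1}{p}}$. -/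
/-!
Write `χ` for the indicator of `S`, `s = |S|`, `t = n - s` and `α i = ∑ u ∈ S, f i u`.
Parseval's identity gives `∑ α i ^ 2 = n s` and `∑ λ i α i ^ 2 = n ⟨χ, A χ⟩`, while
`E(S, Sᶜ) = d (s - ⟨χ, A χ⟩)`, so the quantity to bound is `(s ^ 2 - ∑ λ i α i ^ 2) / (s t)`.
The constant vector lies in the span of the eigenvectors of eigenvalue `1`, so by Cauchy–Schwarz
these carry at least `s ^ 2` of the mass `∑ α i ^ 2 = s ^ 2 + s t`. The remaining mass `s t` is
spread over the indices `i ≠ 0` with weights at most `s ^ 2` (as `|f i u| ≤ 1`), and Hölder's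
inequality with these weights bounds the ratio by
`(∑ i ≠ 0, |λ i| ^ p) ^ (1 / p) (s / t) ^ (1 / p)`. Applying this to `S` or `Sᶜ`, whichever is
smaller, and the inequality `(s / t) ^ a (s + t) ≤ s ^ a t ^ (1 - a) + s ^ (1 - a) t ^ a` for
`s ≤ t`, `a = 1 / (p + 1)`, gives the claim.
-/

open Finset Matrix

theorem sum_mul_le_Lp_mul_rpow_of_le {ι : Type*} (J : Finset ι) {p X : ℝ} (hp : 1 ≤ p)
    (a x : ι → ℝ) (hX : 0 ≤ X) (ha : ∀ i, 0 ≤ a i) (hx : ∀ i, 0 ≤ x i) (hxX : ∀ i, x i ≤ X) :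
    ∑ i ∈ J, a i * x i
      ≤ (∑ i ∈ J, a i ^ p) ^ (1 / p) * X ^ (1 / p) * (∑ i ∈ J, x i) ^ (1 - 1 / p) := by
  calc ∑ i ∈ J, a i * x i = ∑ i ∈ J, x i * a i := by simp only [mul_comm]
    _ ≤ (∑ i ∈ J, x i) ^ (1 - p⁻¹) * (∑ i ∈ J, x i * a i ^ p) ^ p⁻¹ :=
      Real.inner_le_weight_mul_Lp_of_nonneg J hp x a hx ha
    _ ≤ (∑ i ∈ J, x i) ^ (1 - p⁻¹) * (X * ∑ i ∈ J, a i ^ p) ^ p⁻¹ := by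
      gcongr
      · exact Real.rpow_nonneg (sum_nonneg fun i _ => hx i) _
      · exact sum_nonneg fun i _ => mul_nonneg (hx i) (Real.rpow_nonneg (ha i) _)
      · rw [mul_sum]
        exact sum_le_sum fun i _ =>
          mul_le_mul_of_nonneg_right (hxX i) (Real.rpow_nonneg (ha i) _)
    _ = _ := by
      rw [Real.mul_rpow hX (sum_nonneg fun i _ => Real.rpow_nonneg (ha i) _), one_div]
      ring

theorem add_sum_mul_le_of_le {ι : Type*} [Fintype ι] [DecidableEq ι] {p X Δ : ℝ} (hp : 1 ≤ p)
    (a w : ι → ℝ) (I : Finset ι) {i₀ : ι} (hi₀ : i₀ ∈ I) (hI : ∀ i ∈ I, a i = 1)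
    (ha : ∀ i, 0 ≤ a i) (hw : ∀ i, 0 ≤ w i) (hwX : ∀ i, w i ≤ X) (hΔ : 0 ≤ Δ)
    (hΔX : Δ ≤ (I.erase i₀).card * X) :
    Δ + ∑ i ∈ Iᶜ, a i * w i
      ≤ (∑ i ∈ univ.erase i₀, a i ^ p) ^ (1 / p) * X ^ (1 / p)
        * (Δ + ∑ i ∈ Iᶜ, w i) ^ (1 - 1 / p) := by
  have split_erase (g : ι → ℝ) :
      ∑ i ∈ univ.erase i₀, g i = ∑ i ∈ I.erase i₀, g i + ∑ i ∈ Iᶜ, g i := by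
    have := I.sum_add_sum_compl g
    rw [← add_sum_erase univ g (mem_univ i₀), ← add_sum_erase I g hi₀] at this
    linarith
  set k := (I.erase i₀).card
  -- Spread `Δ` evenly over the `k` indices of `I.erase i₀`; each share is at most `X`.
  set x : ι → ℝ := fun i => if i ∈ I then Δ / k else w i
  have hsum_x (g : ι → ℝ) (hg : ∀ i ∈ I, g i = 1) :
      ∑ i ∈ univ.erase i₀, g i * x i = Δ + ∑ i ∈ Iᶜ, g i * w i := by
    rw [split_erase]
    congr 1
    · rw [sum_congr rfl fun i hi => show g i * x i = Δ / k by
        simp only [x, hg i (mem_of_mem_erase hi), one_mul, if_pos (mem_of_mem_erase hi)]]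
      rw [sum_const, nsmul_eq_mul]
      rcases eq_or_ne (k : ℝ) 0 with hk | hk
      · rw [hk, zero_mul]; linarith [hk ▸ hΔX]
      · exact mul_div_cancel₀ _ hk
    · exact sum_congr rfl fun i hi => by simp only [x, if_neg (mem_compl.mp hi)]
  have hx : ∀ i, 0 ≤ x i := fun i => by
    by_cases hi : i ∈ I <;> simp only [x, hi, if_true, if_false]
    exacts [by positivity, hw i]
  have hxX : ∀ i, x i ≤ X := fun i => by
    by_cases hi : i ∈ I <;> simp only [x, hi, if_true, if_false]
    · rcases eq_or_ne (k : ℝ) 0 with hk | hk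
      · rw [hk, div_zero]; exact (hw i).trans (hwX i)
      · rw [div_le_iff₀ (by positivity)]; linarith
    · exact hwX i
  have hsum_x_one : ∑ i ∈ univ.erase i₀, x i = Δ + ∑ i ∈ Iᶜ, w i := by
    simpa only [one_mul] using hsum_x (fun _ => 1) fun _ _ => rfl
  rw [← hsum_x a hI, ← hsum_x_one]
  exact sum_mul_le_Lp_mul_rpow_of_le _ hp a x ((hw i₀).trans (hwX i₀)) ha hx hxX

theorem abs_sub_sum_mul_le_add {ι : Type*} [Fintype ι] [DecidableEq ι] {X : ℝ} (lam w : ι → ℝ)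
    (I : Finset ι) (hI : ∀ i ∈ I, lam i = 1) (hw : ∀ i, 0 ≤ w i) (hX : X ≤ ∑ i ∈ I, w i) :
    |X - ∑ i, lam i * w i| ≤ (∑ i ∈ I, w i - X) + ∑ i ∈ Iᶜ, |lam i| * w i := by
  rw [← I.sum_add_sum_compl, sum_congr rfl fun i hi => by rw [hI i hi, one_mul], abs_sub_comm]
  calc |∑ i ∈ I, w i + ∑ i ∈ Iᶜ, lam i * w i - X|
      = |(∑ i ∈ I, w i - X) + ∑ i ∈ Iᶜ, lam i * w i| := by ring_nf
    _ ≤ |∑ i ∈ I, w i - X| + |∑ i ∈ Iᶜ, lam i * w i| := abs_add_le _ _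
    _ ≤ _ := add_le_add (abs_of_nonneg (sub_nonneg.mpr hX)).le <|
        (abs_sum_le_sum_abs _ _).trans_eq <| sum_congr rfl fun i _ => by
          rw [abs_mul, abs_of_nonneg (hw i)]

theorem abs_sub_sum_mul_le {ι : Type*} [Fintype ι] [DecidableEq ι] {p X : ℝ} (hp : 1 ≤ p)
    (lam w : ι → ℝ) (I : Finset ι) {i₀ : ι} (hi₀ : i₀ ∈ I) (hI : ∀ i ∈ I, lam i = 1)
    (hw : ∀ i, 0 ≤ w i) (hwX : ∀ i, w i ≤ X) (hX : X ≤ ∑ i ∈ I, w i) :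
    |X - ∑ i, lam i * w i|
      ≤ (∑ i ∈ univ.erase i₀, |lam i| ^ p) ^ (1 / p) * X ^ (1 / p)
        * (∑ i, w i - X) ^ (1 - 1 / p) := by
  have hΔX : ∑ i ∈ I, w i - X ≤ (I.erase i₀).card * X := by
    have := sum_le_card_nsmul (I.erase i₀) w X fun i _ => hwX i
    rw [nsmul_eq_mul] at this
    linarith [add_sum_erase I w hi₀, hwX i₀]
  calc |X - ∑ i, lam i * w i| ≤ (∑ i ∈ I, w i - X) + ∑ i ∈ Iᶜ, |lam i| * w i :=
        abs_sub_sum_mul_le_add lam w I hI hw hX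
    _ ≤ (∑ i ∈ univ.erase i₀, |lam i| ^ p) ^ (1 / p) * X ^ (1 / p)
          * ((∑ i ∈ I, w i - X) + ∑ i ∈ Iᶜ, w i) ^ (1 - 1 / p) :=
        add_sum_mul_le_of_le hp (|lam ·|) w I hi₀ (fun i hi => by rw [hI i hi, abs_one])
          (fun i => abs_nonneg _) hw hwX (sub_nonneg.mpr hX) hΔX
    _ = _ := by rw [sub_add_eq_add_sub, I.sum_add_sum_compl]

theorem sq_rpow_mul_mul_rpow_one_sub {s t : ℝ} (hs : 0 < s) (ht : 0 < t) (r : ℝ) :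
    (s ^ 2) ^ r * (s * t) ^ (1 - r) = (s / t) ^ r * (s * t) := by
  rw [Real.rpow_sub (mul_pos hs ht), Real.rpow_one, ← mul_div_assoc, mul_div_right_comm,
    ← Real.div_rpow (by positivity) (by positivity)]
  congr 2
  field_simp

theorem div_rpow_le_of_le {s t a : ℝ} (hs : 0 < s) (hst : s ≤ t) (ha : 0 ≤ a) :
    (s / t) ^ a ≤ (s ^ a * t ^ (1 - a) + s ^ (1 - a) * t ^ a) / (s + t) := by
  have ht : 0 < t := hs.trans_le hst
  have hs_split : s ^ (1 - a) * s ^ a = s := by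
    rw [← Real.rpow_add hs, sub_add_cancel, Real.rpow_one]
  have ht_split : t ^ (1 - a) * t ^ a = t := by
    rw [← Real.rpow_add ht, sub_add_cancel, Real.rpow_one]
  have hst_a : s ^ a ≤ t ^ a := Real.rpow_le_rpow hs.le hst ha
  rw [Real.div_rpow hs.le ht.le, div_le_div_iff₀ (by positivity) (by positivity)]
  calc s ^ a * (s + t) = s ^ (1 - a) * (s ^ a * s ^ a) + s ^ a * t := by
        linear_combination (-s ^ a) * hs_split
    _ ≤ s ^ (1 - a) * (t ^ a * t ^ a) + s ^ a * t := by gcongr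
    _ = (s ^ a * t ^ (1 - a) + s ^ (1 - a) * t ^ a) * t ^ a := by
        linear_combination (-s ^ a) * ht_split

theorem div_rpow_inv_le {s t p : ℝ} (hs : 0 < s) (hst : s ≤ t) (hp : 0 < p) :
    (s / t) ^ (1 / p)
      ≤ ((s ^ (1 / (p + 1)) * t ^ (p / (p + 1)) + s ^ (p / (p + 1)) * t ^ (1 / (p + 1)))
          / (s + t)) ^ ((p + 1) / p) := by
  have hst0 : 0 ≤ s / t := div_nonneg hs.le (hs.le.trans hst)
  have hexp : p / (p + 1) = 1 - 1 / (p + 1) := by field_simp; ring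
  calc (s / t) ^ (1 / p) = ((s / t) ^ (1 / (p + 1))) ^ ((p + 1) / p) := by
        rw [← Real.rpow_mul hst0]
        congr 1
        field_simp
    _ ≤ _ := by
        rw [hexp]
        exact Real.rpow_le_rpow (Real.rpow_nonneg hst0 _)
          (div_rpow_le_of_le hs hst (by positivity)) (by positivity)

section Orthonormal

variable {ι V : Type*} [Fintype ι] [Fintype V] [DecidableEq ι] [DecidableEq V] {c : ℝ}
  {f : ι → V → ℝ}

theorem sum_mul_eq_ite_of_orthonormal (hcard : Fintype.card ι = Fintype.card V)
    (hortho : ∀ i j, c * ∑ u, f i u * f j u = if i = j then 1 else 0) (u v : V) :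
    c * ∑ i, f i u * f i v = if u = v then 1 else 0 := by
  have hrows : (c • of f) * (of f)ᵀ = 1 := by
    ext i j
    simp only [mul_apply, Matrix.smul_apply, of_apply, transpose_apply, smul_eq_mul, one_apply,
      ← hortho i j, mul_sum, mul_assoc]
  have hcols := (mul_eq_one_comm_of_equiv (Fintype.equivOfCardEq hcard)).mp hrows
  simpa only [mul_apply, Matrix.smul_apply, of_apply, transpose_apply, smul_eq_mul, one_apply,
    mul_sum, mul_left_comm c] using congrFun (congrFun hcols u) v

theorem mul_sum_dotProduct_mul_dotProduct (hcard : Fintype.card ι = Fintype.card V)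
    (hortho : ∀ i j, c * ∑ u, f i u * f j u = if i = j then 1 else 0) (x z : V → ℝ) :
    c * ∑ i, (x ⬝ᵥ f i) * (z ⬝ᵥ f i) = x ⬝ᵥ z := by
  calc c * ∑ i, (x ⬝ᵥ f i) * (z ⬝ᵥ f i)
      = c * ∑ i, ∑ u, ∑ v, x u * z v * (f i u * f i v) := by
        simp only [dotProduct, sum_mul_sum, mul_mul_mul_comm]
    _ = ∑ u, ∑ v, x u * z v * (c * ∑ i, f i u * f i v) := by
        simp only [mul_sum]
        rw [sum_comm]
        refine sum_congr rfl fun u _ => ?_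
        rw [sum_comm]
        exact sum_congr rfl fun v _ => sum_congr rfl fun i _ => by ring
    _ = x ⬝ᵥ z := by
        simp only [sum_mul_eq_ite_of_orthonormal hcard hortho, mul_ite, mul_one, mul_zero,
          sum_ite_eq, mem_univ, if_true, dotProduct]

theorem sq_dotProduct_le_mul_sum_sq (hc : 0 ≤ c) (hcard : Fintype.card ι = Fintype.card V)
    (hortho : ∀ i j, c * ∑ u, f i u * f j u = if i = j then 1 else 0) (I : Finset ι)
    (x y : V → ℝ) (hy : ∀ i ∉ I, y ⬝ᵥ f i = 0) :
    (x ⬝ᵥ y) ^ 2 ≤ c * (∑ i ∈ I, (x ⬝ᵥ f i) ^ 2) * (y ⬝ᵥ y) := by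
  have hxy : x ⬝ᵥ y = c * ∑ i ∈ I, (x ⬝ᵥ f i) * (y ⬝ᵥ f i) := by
    rw [← mul_sum_dotProduct_mul_dotProduct hcard hortho,
      sum_subset (subset_univ I) fun i _ hi => by rw [hy i hi, mul_zero]]
  have hyy : c * ∑ i ∈ I, (y ⬝ᵥ f i) ^ 2 ≤ y ⬝ᵥ y := by
    rw [← mul_sum_dotProduct_mul_dotProduct hcard hortho y y]
    simp only [← sq]
    exact mul_le_mul_of_nonneg_left
      (sum_le_sum_of_subset_of_nonneg (subset_univ I) fun i _ _ => sq_nonneg _) hc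
  calc (x ⬝ᵥ y) ^ 2 = c * (c * (∑ i ∈ I, (x ⬝ᵥ f i) * (y ⬝ᵥ f i)) ^ 2) := by rw [hxy]; ring
    _ ≤ c * ((∑ i ∈ I, (x ⬝ᵥ f i) ^ 2) * (c * ∑ i ∈ I, (y ⬝ᵥ f i) ^ 2)) := by
        refine mul_le_mul_of_nonneg_left ((mul_le_mul_of_nonneg_left
          (sum_mul_sq_le_sq_mul_sq I _ _) hc).trans_eq (by ring)) hc
    _ ≤ c * (∑ i ∈ I, (x ⬝ᵥ f i) ^ 2) * (y ⬝ᵥ y) := by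
        rw [← mul_assoc]
        exact mul_le_mul_of_nonneg_left hyy
          (mul_nonneg hc (sum_nonneg fun i _ => sq_nonneg _))

theorem mul_sum_eigenvalue_mul_sq {A : Matrix V V ℝ} (hA : Aᵀ = A) {lam : ι → ℝ}
    (heig : ∀ i, A *ᵥ f i = lam i • f i) (hcard : Fintype.card ι = Fintype.card V)
    (hortho : ∀ i j, c * ∑ u, f i u * f j u = if i = j then 1 else 0) (x : V → ℝ) :
    c * ∑ i, lam i * (x ⬝ᵥ f i) ^ 2 = x ⬝ᵥ (A *ᵥ x) := by
  have hAx (i : ι) : (A *ᵥ x) ⬝ᵥ f i = lam i * (x ⬝ᵥ f i) := by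
    rw [← hA, mulVec_transpose, ← dotProduct_mulVec, heig, dotProduct_smul, smul_eq_mul]
  rw [← mul_sum_dotProduct_mul_dotProduct hcard hortho]
  simp only [hAx]
  congr 1
  exact sum_congr rfl fun i _ => by ring

end Orthonormal

theorem dotProduct_eq_zero_of_eigenvalue_ne {R V : Type*} [Field R] [Fintype V]
    {A : Matrix V V R} {x y : V → R} {μ ν : R} (hx : x ᵥ* A = μ • x) (hy : A *ᵥ y = ν • y)
    (hne : μ ≠ ν) : x ⬝ᵥ y = 0 := by
  have h : μ * (x ⬝ᵥ y) = ν * (x ⬝ᵥ y) := by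
    rw [← smul_eq_mul, ← smul_dotProduct, ← hx, ← dotProduct_mulVec, hy, dotProduct_smul,
      smul_eq_mul]
  exact (mul_eq_zero.mp (by linear_combination h : (μ - ν) * (x ⬝ᵥ y) = 0)).resolve_left
    (sub_ne_zero.mpr hne)

theorem indicator_one_dotProduct {V R : Type*} [Fintype V] [NonAssocSemiring R] (S : Finset V)
    (g : V → R) : (S : Set V).indicator 1 ⬝ᵥ g = ∑ u ∈ S, g u := by
  rw [dotProduct, ← sum_subset (subset_univ S)]
  · exact sum_congr rfl fun u hu => by
      rw [Set.indicator_of_mem (mem_coe.mpr hu), Pi.one_apply, one_mul]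
  · intro u _ hu
    rw [Set.indicator_of_notMem (mt mem_coe.mp hu), zero_mul]

theorem sub_card_pos_of_ne_univ {V : Type*} [Fintype V] {S : Finset V} (hS : S ≠ univ) :
    (0 : ℝ) < Fintype.card V - S.card := by
  rw [sub_pos]
  exact_mod_cast S.card_lt_iff_ne_univ.mpr hS

section Graph

variable {V : Type*} {d : ℕ} {e : V → V → ℕ}

noncomputable def normalizedAdj (d : ℕ) (e : V → V → ℕ) : Matrix V V ℝ :=
  of fun u v => (e u v : ℝ) / d

theorem normalizedAdj_transpose (hsymm : ∀ u v, e u v = e v u) :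
    (normalizedAdj d e)ᵀ = normalizedAdj d e := by
  ext u v
  simp only [normalizedAdj, transpose_apply, of_apply, hsymm u v]

theorem one_vecMul_normalizedAdj [Fintype V] (hd : d ≠ 0) (hsymm : ∀ u v, e u v = e v u)
    (hreg : ∀ u, ∑ v, e u v = d) :
    (1 : V → ℝ) ᵥ* normalizedAdj d e = 1 := by
  ext v
  simp only [normalizedAdj, vecMul, dotProduct, Pi.one_apply, one_mul, of_apply, hsymm _ v,
    ← sum_div, ← Nat.cast_sum, hreg]
  exact div_self (Nat.cast_ne_zero.mpr hd)

theorem sum_sum_compl_eq_mul_sub [Fintype V] [DecidableEq V] (hd : d ≠ 0)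
    (hreg : ∀ u, ∑ v, e u v = d) (S : Finset V) :
    ∑ u ∈ S, ∑ v ∈ Sᶜ, (e u v : ℝ)
      = d * (S.card - (S : Set V).indicator 1 ⬝ᵥ
          (normalizedAdj d e *ᵥ (S : Set V).indicator 1)) := by
  have hrow (u : V) : ∑ v ∈ Sᶜ, (e u v : ℝ) = d - ∑ v ∈ S, (e u v : ℝ) := by
    rw [eq_sub_iff_add_eq', sum_add_sum_compl, ← Nat.cast_sum, hreg]
  simp only [normalizedAdj, indicator_one_dotProduct, mulVec,
    dotProduct_comm _ ((S : Set V).indicator 1), of_apply, hrow, sum_sub_distrib, sum_const,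
    nsmul_eq_mul, ← sum_div]
  rw [mul_sub, mul_div_cancel₀ _ (Nat.cast_ne_zero.mpr hd), mul_comm]

end Graph

theorem sum_compl_sum_eq_sum_sum_compl {V β : Type*} [Fintype V] [DecidableEq V]
    [AddCommMonoid β] {g : V → V → β} (hg : ∀ u v, g u v = g v u) (S : Finset V) :
    ∑ u ∈ Sᶜ, ∑ v ∈ S, g u v = ∑ u ∈ S, ∑ v ∈ Sᶜ, g u v := by
  rw [sum_comm]
  exact sum_congr rfl fun v _ => sum_congr rfl fun u _ => hg u v

section Spectral

variable {V ι : Type*} [Fintype V] [DecidableEq V] [Fintype ι] [DecidableEq ι] {d : ℕ}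
  {e : V → V → ℕ} {lam : ι → ℝ} {f : ι → V → ℝ}

theorem sq_card_le_sum_sq_of_eigenvalue_one [Nonempty V] (hd : d ≠ 0)
    (hsymm : ∀ u v, e u v = e v u) (hreg : ∀ u, ∑ v, e u v = d)
    (hcard : Fintype.card ι = Fintype.card V)
    (heig : ∀ i, normalizedAdj d e *ᵥ f i = lam i • f i)
    (hortho : ∀ i j, (1 / (Fintype.card V : ℝ)) * ∑ u, f i u * f j u = if i = j then 1 else 0)
    (S : Finset V) :
    (S.card : ℝ) ^ 2 ≤ ∑ i ∈ univ.filter (lam · = 1), ((S : Set V).indicator 1 ⬝ᵥ f i) ^ 2 := by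
  have hone (i : ι) (hi : i ∉ univ.filter (lam · = 1)) : (1 : V → ℝ) ⬝ᵥ f i = 0 :=
    dotProduct_eq_zero_of_eigenvalue_ne (by rw [one_smul, one_vecMul_normalizedAdj hd hsymm hreg])
      (heig i) (Ne.symm (by simpa using hi))
  have h := sq_dotProduct_le_mul_sum_sq (by positivity) hcard hortho _
    ((S : Set V).indicator 1) _ hone
  rw [indicator_one_dotProduct] at h
  simp only [dotProduct_one, Pi.one_apply, sum_const, card_univ, nsmul_eq_mul, mul_one] at h
  rwa [mul_right_comm, one_div_mul_cancel (by positivity), one_mul] at h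

theorem cut_div_sub_one_eq (hd : d ≠ 0) (hsymm : ∀ u v, e u v = e v u)
    (hreg : ∀ u, ∑ v, e u v = d) (hcard : Fintype.card ι = Fintype.card V)
    (heig : ∀ i, normalizedAdj d e *ᵥ f i = lam i • f i)
    (hortho : ∀ i j, (1 / (Fintype.card V : ℝ)) * ∑ u, f i u * f j u = if i = j then 1 else 0)
    {S : Finset V} (hS : S.Nonempty) (hS' : S ≠ univ) :
    (∑ u ∈ S, ∑ v ∈ Sᶜ, (e u v : ℝ)) / ((d : ℝ) / Fintype.card V * S.card
        * ((Fintype.card V : ℝ) - S.card)) - 1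
      = ((S.card : ℝ) ^ 2 - ∑ i, lam i * ((S : Set V).indicator 1 ⬝ᵥ f i) ^ 2)
          / (S.card * ((Fintype.card V : ℝ) - S.card)) := by
  have hs : (0 : ℝ) < S.card := by exact_mod_cast hS.card_pos
  have ht := sub_card_pos_of_ne_univ hS'
  have hspec := mul_sum_eigenvalue_mul_sq (normalizedAdj_transpose hsymm) heig hcard hortho
    ((S : Set V).indicator 1)
  rw [sum_sum_compl_eq_mul_sub hd hreg, ← hspec]
  have hd' : (d : ℝ) ≠ 0 := Nat.cast_ne_zero.mpr hd
  have hn : (Fintype.card V : ℝ) ≠ 0 := by linarith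
  field_simp
  ring

theorem abs_cut_div_sub_one_le (hd : d ≠ 0) (hsymm : ∀ u v, e u v = e v u)
    (hreg : ∀ u, ∑ v, e u v = d) {p : ℝ} (hp : 1 ≤ p) {i₀ : ι} (hlam0 : lam i₀ = 1)
    (hcard : Fintype.card ι = Fintype.card V)
    (heig : ∀ i, normalizedAdj d e *ᵥ f i = lam i • f i)
    (hortho : ∀ i j, (1 / (Fintype.card V : ℝ)) * ∑ u, f i u * f j u = if i = j then 1 else 0)
    (hbound : ∀ i u, |f i u| ≤ 1) {S : Finset V} (hS : S.Nonempty) (hS' : S ≠ univ) :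
    |(∑ u ∈ S, ∑ v ∈ Sᶜ, (e u v : ℝ)) / ((d : ℝ) / Fintype.card V * S.card
        * ((Fintype.card V : ℝ) - S.card)) - 1|
      ≤ (∑ i ∈ univ.erase i₀, |lam i| ^ p) ^ (1 / p)
        * (S.card / ((Fintype.card V : ℝ) - S.card)) ^ (1 / p) := by
  have : Nonempty V := hS.to_type
  set χ : V → ℝ := (S : Set V).indicator 1
  have hs : (0 : ℝ) < S.card := by exact_mod_cast hS.card_pos
  have ht := sub_card_pos_of_ne_univ hS'
  have hχχ : χ ⬝ᵥ χ = S.card := by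
    rw [indicator_one_dotProduct,
      sum_congr rfl fun u hu => Set.indicator_of_mem (mem_coe.mpr hu) _]
    simp
  have hα (i : ι) : (χ ⬝ᵥ f i) ^ 2 ≤ (S.card : ℝ) ^ 2 := by
    refine sq_le_sq.mpr (le_abs.mpr (Or.inl ?_))
    rw [indicator_one_dotProduct]
    refine (abs_sum_le_sum_abs _ _).trans ((sum_le_sum fun u _ => hbound i u).trans ?_)
    simp
  have htot : ∑ i, (χ ⬝ᵥ f i) ^ 2 - (S.card : ℝ) ^ 2
      = S.card * ((Fintype.card V : ℝ) - S.card) := by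
    have h := mul_sum_dotProduct_mul_dotProduct hcard hortho χ χ
    rw [hχχ] at h
    simp only [← sq] at h
    field_simp at h
    linear_combination h
  rw [cut_div_sub_one_eq hd hsymm hreg hcard heig hortho hS hS', abs_div,
    abs_of_pos (mul_pos hs ht), div_le_iff₀ (mul_pos hs ht)]
  calc |(S.card : ℝ) ^ 2 - ∑ i, lam i * (χ ⬝ᵥ f i) ^ 2|
      ≤ (∑ i ∈ univ.erase i₀, |lam i| ^ p) ^ (1 / p) * ((S.card : ℝ) ^ 2) ^ (1 / p)
        * (∑ i, (χ ⬝ᵥ f i) ^ 2 - (S.card : ℝ) ^ 2) ^ (1 - 1 / p) :=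
        abs_sub_sum_mul_le hp lam (fun i => (χ ⬝ᵥ f i) ^ 2) _
          (mem_filter.mpr ⟨mem_univ i₀, hlam0⟩) (fun i hi => (mem_filter.mp hi).2)
          (fun i => sq_nonneg _) hα
          (sq_card_le_sum_sq_of_eigenvalue_one hd hsymm hreg hcard heig hortho S)
    _ = _ := by rw [htot, mul_assoc, sq_rpow_mul_mul_rpow_one_sub hs ht, mul_assoc]

end Spectral

theorem stmt12_general {V : Type*} [Fintype V] [DecidableEq V] (n d : ℕ)
    (hn : Fintype.card V = n) (hn0 : 0 < n) (hd : 0 < d)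
    (e : V → V → ℕ) (hsymm : ∀ u v, e u v = e v u) (hreg : ∀ u, ∑ v, e u v = d)
    (p : ℝ) (hp : 1 ≤ p)
    (lam : Fin n → ℝ) (f : Fin n → V → ℝ)
    (hlam0 : lam ⟨0, hn0⟩ = 1)
    (heig : ∀ i, (Matrix.of fun u v : V => (e u v : ℝ) / d).mulVec (f i) = lam i • f i)
    (hortho : ∀ i j, (1 / (n : ℝ)) * ∑ u, f i u * f j u = if i = j then 1 else 0)
    (hbound : ∀ i u, |f i u| ≤ 1)
    (S : Finset V) (hS : S.Nonempty) (hS' : S ≠ Finset.univ) :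
    |(∑ u ∈ S, ∑ v ∈ Sᶜ, (e u v : ℝ)) / (((d : ℝ) / n) * S.card * ((n : ℝ) - S.card)) - 1|
      ≤ (∑ i ∈ Finset.univ.erase (⟨0, hn0⟩ : Fin n), |lam i| ^ p) ^ (1 / p) *
        (((S.card : ℝ) ^ (1 / (p + 1)) * ((n : ℝ) - S.card) ^ (p / (p + 1)) +
          (S.card : ℝ) ^ (p / (p + 1)) * ((n : ℝ) - S.card) ^ (1 / (p + 1))) / n)
          ^ ((p + 1) / p) := by
  subst hn
  have hcard := Fintype.card_fin (Fintype.card V)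
  have hSc : Sᶜ.Nonempty := Sᶜ.compl_ne_univ_iff_nonempty.mp (by rwa [compl_compl])
  have hSc' : Sᶜ ≠ univ := S.compl_ne_univ_iff_nonempty.mpr hS
  have hS_le :=
    abs_cut_div_sub_one_le hd.ne' hsymm hreg hp hlam0 hcard heig hortho hbound hS hS'
  have hSc_le :=
    abs_cut_div_sub_one_le hd.ne' hsymm hreg hp hlam0 hcard heig hortho hbound hSc hSc'
  rw [compl_compl, sum_compl_sum_eq_sum_sum_compl (fun u v => congrArg Nat.cast (hsymm u v)),
    card_compl, Nat.cast_sub (card_le_univ S), sub_sub_cancel, mul_right_comm] at hSc_le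
  have hs : (0 : ℝ) < S.card := by exact_mod_cast hS.card_pos
  have ht := sub_card_pos_of_ne_univ hS'
  rcases le_total (S.card : ℝ) (Fintype.card V - S.card) with h | h
  · refine hS_le.trans (mul_le_mul_of_nonneg_left ?_ (by positivity))
    simpa only [add_sub_cancel] using div_rpow_inv_le hs h (zero_lt_one.trans_le hp)
  · refine hSc_le.trans (mul_le_mul_of_nonneg_left ?_ (by positivity))
    refine (div_rpow_inv_le ht h (zero_lt_one.trans_le hp)).trans_eq ?_
    rw [sub_add_cancel, add_comm]
    congr 3 <;> ring

theorem stmt12 {V : Type*} [Fintype V] [DecidableEq V] (n d : ℕ)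
    (hn : Fintype.card V = n) (hn0 : 0 < n) (hd : 0 < d)
    (e : V → V → ℕ) (hsymm : ∀ u v, e u v = e v u) (hreg : ∀ u, ∑ v, e u v = d)
    (p : ℝ) (hp : 1 ≤ p)
    (lam : Fin n → ℝ) (f : Fin n → V → ℝ)
    (hanti : Antitone lam) (hlam0 : lam ⟨0, hn0⟩ = 1)
    (heig : ∀ i, (Matrix.of fun u v : V => (e u v : ℝ) / d).mulVec (f i) = lam i • f i)
    (hortho : ∀ i j, (1 / (n : ℝ)) * ∑ u, f i u * f j u = if i = j then 1 else 0)
    (hbound : ∀ i u, |f i u| ≤ 1)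
    (S : Finset V) (hS : S.Nonempty) (hS' : S ≠ Finset.univ) :
    |(∑ u ∈ S, ∑ v ∈ Sᶜ, (e u v : ℝ)) / (((d : ℝ) / n) * S.card * ((n : ℝ) - S.card)) - 1|
      ≤ (∑ i ∈ Finset.univ.erase (⟨0, hn0⟩ : Fin n), |lam i| ^ p) ^ (1 / p) *
        (((S.card : ℝ) ^ (1 / (p + 1)) * ((n : ℝ) - S.card) ^ (p / (p + 1)) +
          (S.card : ℝ) ^ (p / (p + 1)) * ((n : ℝ) - S.card) ^ (1 / (p + 1))) / n)
          ^ ((p + 1) / p) :=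
  stmt12_general n d hn hn0 hd e hsymm hreg p hp lam f hlam0 heig hortho hbound S hS hS'
end
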